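/- Under the stated bi-orthogonality setup, for every m ≥ 1 and all z ∈ ℂ: B^{(1)}_{m-1}(z) G_m(z) − V_m(z) G^{(1)}_{m-1}(z) = 0 (the N×N zero matrix). -/

import Mathlib

/-!
Entrywise, `B⁽¹⁾(z) G(z) - V(z) G⁽¹⁾(z)` is `U` applied to the difference quotient
`(V(z) G(h(x)) - V(h(x)) G(z)) / (z - h(x))`. By the three-term recurrences `V_m` and `G_m` have
degree at most `m`, so every coefficient of this quotient in powers of `z` is a combination of
`V_m(h(x)) h(x)^e P₀(x)` and `G_m(h(x))ᵀ h(x)^e P₀(x)` with `e < m`, all annihilated by `U`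
through left and right orthogonality.
-/

open Polynomial Matrix Finset

noncomputable section

/-- `N × N` matrices with polynomial entries, viewed as matrix polynomials. -/
abbrev MatPoly (N : ℕ) := Matrix (Fin N) (Fin N) (Polynomial ℂ)

/-- Evaluation of a matrix polynomial at a complex number (entrywise evaluation). -/
def evalM {N : ℕ} (Q : MatPoly N) (z : ℂ) : Matrix (Fin N) (Fin N) ℂ :=
  Q.map (Polynomial.eval z)

/-- Composition of a matrix polynomial with a scalar polynomial `h` (entrywise). -/
def compH {N : ℕ} (Q : MatPoly N) (h : Polynomial ℂ) : MatPoly N :=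
  Q.map fun p => p.comp h

/-- The vector polynomial `P₀(x) = [1, x, …, x^{N-1}]ᵀ`. -/
def P0 (N : ℕ) : Fin N → Polynomial ℂ := fun i => Polynomial.X ^ (i : ℕ)

/-- Action of a vector of linear functionals `U` on a vector polynomial `P`:
the matrix with `(i,j)` entry `u^j(p_i)`. -/
def applyU {N : ℕ} (U : Fin N → (Polynomial ℂ →ₗ[ℂ] ℂ)) (P : Fin N → Polynomial ℂ) :
    Matrix (Fin N) (Fin N) ℂ := Matrix.of fun i j => U j (P i)

/-- The vector polynomial `B(x) = V(h(x)) P₀(x)` associated to a matrix polynomial `V`. -/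
def Bvec {N : ℕ} (V : MatPoly N) (h : Polynomial ℂ) : Fin N → Polynomial ℂ :=
  (compH V h).mulVec (P0 N)

/-- `((Qᵀ U)(P))_{i,j} = Σ_s u^s (Q_{s,j} p_i)`. -/
def transApply {N : ℕ} (U : Fin N → (Polynomial ℂ →ₗ[ℂ] ℂ)) (Q : MatPoly N)
    (P : Fin N → Polynomial ℂ) : Matrix (Fin N) (Fin N) ℂ :=
  Matrix.of fun i j => ∑ s, U s (Q s j * P i)

/-- The difference quotient `(p(z) - p(h(x)))/(z - h(x))` as a polynomial in the outer
variable `z` with coefficients polynomials in the inner variable `x`. -/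
def diffQuot (p h : Polynomial ℂ) : Polynomial (Polynomial ℂ) :=
  (p.map (Polynomial.C : ℂ →+* Polynomial ℂ) - Polynomial.C (p.comp h)) /ₘ
    (Polynomial.X - Polynomial.C h)

/-- Apply a linear functional to the (inner-variable) coefficients of a two-variable
polynomial, leaving a polynomial in the outer variable. -/
def applyCoeff (u : Polynomial ℂ →ₗ[ℂ] ℂ) (q : Polynomial (Polynomial ℂ)) : Polynomial ℂ :=
  q.sum fun n a => Polynomial.monomial n (u a)

/-- The first kind associated polynomial built from `W = V_{m+1}`:
`B⁽¹⁾_m(z) = U_x( ((W(z) - W(h(x)))/(z - h(x))) · P₀(x) )`. -/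
def assocB {N : ℕ} (U : Fin N → (Polynomial ℂ →ₗ[ℂ] ℂ)) (W : MatPoly N) (h : Polynomial ℂ) :
    MatPoly N :=
  Matrix.of fun i j =>
    applyCoeff (U j) (∑ s, diffQuot (W i s) h * Polynomial.C (Polynomial.X ^ (s : ℕ)))

/-- The first kind associated polynomial built from `W = G_{m+1}`:
`G⁽¹⁾_m(z) = ( ((W(z) - W(h(x)))ᵀ/(z - h(x))) U_x )(P₀(x))`. -/
def assocG {N : ℕ} (U : Fin N → (Polynomial ℂ →ₗ[ℂ] ℂ)) (W : MatPoly N) (h : Polynomial ℂ) :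
    MatPoly N :=
  Matrix.of fun i j =>
    ∑ s, applyCoeff (U s) (diffQuot (W s j) h * Polynomial.C (Polynomial.X ^ (i : ℕ)))

/-- The shifted sequence of first kind associated polynomials: `B1seq U V h k = B⁽¹⁾_{k-1}`,
with the convention `B⁽¹⁾_{-1} = 0`. -/
def B1seq {N : ℕ} (U : Fin N → (Polynomial ℂ →ₗ[ℂ] ℂ)) (V : ℕ → MatPoly N)
    (h : Polynomial ℂ) : ℕ → MatPoly N :=
  fun k => if k = 0 then 0 else assocB U (V k) h

/-- The shifted sequence `G1seq U G h k = G⁽¹⁾_{k-1}`, with `G⁽¹⁾_{-1} = 0`. -/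
def G1seq {N : ℕ} (U : Fin N → (Polynomial ℂ →ₗ[ℂ] ℂ)) (G : ℕ → MatPoly N)
    (h : Polynomial ℂ) : ℕ → MatPoly N :=
  fun k => if k = 0 then 0 else assocG U (G k) h


namespace Polynomial

theorem coeff_divByMonic_X_sub_C_of_natDegree_le {R : Type*} [CommRing R] {p : R[X]} {d : ℕ}
    (hp : p.natDegree ≤ d) (a : R) (n : ℕ) :
    (p /ₘ (X - C a)).coeff n = ∑ i ∈ Icc (n + 1) d, a ^ (i - (n + 1)) * p.coeff i := by
  rw [coeff_divByMonic_X_sub_C]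
  refine sum_subset (Icc_subset_Icc_right hp) fun i _ hi => ?_
  rw [coeff_eq_zero_of_natDegree_lt (by simp_all), mul_zero]

end Polynomial

theorem applyCoeff_eq_lsum (u : ℂ[X] →ₗ[ℂ] ℂ) (q : ℂ[X][X]) :
    applyCoeff u q = lsum (fun n => (monomial n).comp u) q := rfl

theorem coeff_applyCoeff (u : ℂ[X] →ₗ[ℂ] ℂ) (q : ℂ[X][X]) (n : ℕ) :
    (applyCoeff u q).coeff n = u (q.coeff n) := by
  rw [applyCoeff, Polynomial.sum, finsetSum_coeff]
  simp only [coeff_monomial]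
  rw [sum_ite_eq']
  split_ifs with hn
  · rfl
  · rw [notMem_support_iff.mp hn, map_zero]

theorem applyCoeff_mul_map_C (u : ℂ[X] →ₗ[ℂ] ℂ) (q : ℂ[X][X]) (p : ℂ[X]) :
    applyCoeff u q * p = applyCoeff u (q * p.map C) := by
  ext n
  simp only [coeff_mul, coeff_applyCoeff, map_sum, coeff_map, mul_comm (q.coeff _),
    ← smul_eq_C_mul, map_smul, smul_eq_mul]
  exact sum_congr rfl fun _ _ => mul_comm _ _

/-- `(p(z) q(h(x)) - p(h(x)) q(z)) / (z - h(x))`, a polynomial in `z` over `ℂ[x]`. -/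
def crossQuot (p q h : ℂ[X]) : ℂ[X][X] :=
  (p.map C * C (q.comp h) - C (p.comp h) * q.map C) /ₘ (X - C h)

theorem X_sub_C_mul_diffQuot (p h : ℂ[X]) :
    (X - C h) * diffQuot p h = p.map C - C (p.comp h) := by
  rw [diffQuot, mul_divByMonic_eq_iff_isRoot]
  simp [IsRoot, eval_map, Polynomial.comp]

theorem diffQuot_mul_sub_mul_diffQuot (p q h : ℂ[X]) :
    diffQuot p h * q.map C - p.map C * diffQuot q h = crossQuot p q h := by
  rw [crossQuot, eq_comm]
  refine (div_modByMonic_unique _ 0 (monic_X_sub_C h) ⟨?_, ?_⟩).1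
  · linear_combination q.map C * X_sub_C_mul_diffQuot p h - p.map C * X_sub_C_mul_diffQuot q h
  · rw [degree_zero, degree_X_sub_C]; exact WithBot.bot_lt_coe 1

theorem coeff_crossQuot {p q : ℂ[X]} {d : ℕ} (hp : p.natDegree ≤ d) (hq : q.natDegree ≤ d)
    (h : ℂ[X]) (n : ℕ) :
    (crossQuot p q h).coeff n = ∑ a ∈ Icc (n + 1) d,
      h ^ (a - (n + 1)) * (C (p.coeff a) * q.comp h - p.comp h * C (q.coeff a)) := by
  have hdeg : (p.map C * C (q.comp h) - C (p.comp h) * q.map C).natDegree ≤ d := by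
    refine (natDegree_sub_le _ _).trans (max_le ?_ ?_)
    · exact (natDegree_mul_C_le _ _).trans (natDegree_map_le.trans hp)
    · exact natDegree_C_mul_le _ _ |>.trans (natDegree_map_le.trans hq)
  rw [crossQuot, coeff_divByMonic_X_sub_C_of_natDegree_le hdeg]
  simp only [coeff_sub, coeff_mul_C, coeff_C_mul, coeff_map]

theorem assocB_mul_sub_mul_assocG_apply {N : ℕ} (U : Fin N → (ℂ[X] →ₗ[ℂ] ℂ)) (W H : MatPoly N)
    (h : ℂ[X]) (i j : Fin N) :
    (assocB U W h * H - W * assocG U H h) i j =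
      ∑ k, applyCoeff (U k) (∑ s, crossQuot (W i s) (H k j) h * C (X ^ (s : ℕ))) := by
  have hB : ∀ k, assocB U W h i k * H k j =
      applyCoeff (U k) (∑ s, diffQuot (W i s) h * C (X ^ (s : ℕ)) * (H k j).map C) := by
    intro k
    rw [assocB, of_apply, applyCoeff_mul_map_C, sum_mul]
  have hG : ∑ s : Fin N, W i s * assocG U H h s j =
      ∑ k, applyCoeff (U k)
        (∑ s : Fin N, diffQuot (H k j) h * C (X ^ (s : ℕ)) * (W i s).map C) := by
    simp only [assocG, of_apply, mul_comm (W i _), sum_mul, applyCoeff_mul_map_C]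
    rw [sum_comm]
    simp only [applyCoeff_eq_lsum, map_sum]
  simp only [Matrix.sub_apply, mul_apply, hB, hG, ← sum_sub_distrib, applyCoeff_eq_lsum,
    ← map_sub, ← diffQuot_mul_sub_mul_diffQuot]
  refine sum_congr rfl fun k _ => congrArg _ (sum_congr rfl fun s _ => by ring)

theorem sum_U_cross_eq_zero_of_orthogonal {N : ℕ} (U : Fin N → (ℂ[X] →ₗ[ℂ] ℂ)) (h : ℂ[X])
    (W H : MatPoly N) {e : ℕ} (hl : applyU U (fun i => h ^ e * Bvec W h i) = 0)
    (hr : transApply U (compH H h) (fun i => h ^ e * P0 N i) = 0)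
    (i j : Fin N) (α β : Fin N → ℂ) :
    ∑ k, U k (∑ s, h ^ e * (C (α s) * (H k j).comp h - (W i s).comp h * C (β k)) *
      X ^ (s : ℕ)) = 0 := by
  have hH : ∀ s : Fin N, ∑ k, U k (h ^ e * X ^ (s : ℕ) * (H k j).comp h) = 0 := fun s => by
    simpa [transApply, compH, P0, mul_comm] using congrFun (congrFun hr s) j
  have hW : ∀ k, ∑ s : Fin N, U k (h ^ e * X ^ (s : ℕ) * (W i s).comp h) = 0 := fun k => by
    simpa [applyU, Bvec, compH, P0, mulVec, dotProduct, mul_sum, mul_comm, mul_assoc]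
      using congrFun (congrFun hl i) k
  have hterm : ∀ k s : Fin N,
      h ^ e * (C (α s) * (H k j).comp h - (W i s).comp h * C (β k)) * X ^ (s : ℕ) =
        α s • (h ^ e * X ^ (s : ℕ) * (H k j).comp h) -
          β k • (h ^ e * X ^ (s : ℕ) * (W i s).comp h) := by
    intro k s
    simp only [smul_eq_C_mul]
    ring
  simp only [hterm, map_sum, map_sub, map_smul, smul_eq_mul, sum_sub_distrib, ← mul_sum]
  rw [sum_comm]
  simp only [← mul_sum, hH, hW, mul_zero, sum_const_zero, sub_zero]

theorem assocB_mul_eq_mul_assocG {N : ℕ} (U : Fin N → (ℂ[X] →ₗ[ℂ] ℂ)) (h : ℂ[X])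
    {W H : MatPoly N} {d : ℕ} (hW : ∀ i j, (W i j).natDegree ≤ d)
    (hH : ∀ i j, (H i j).natDegree ≤ d)
    (hl : ∀ e < d, applyU U (fun i => h ^ e * Bvec W h i) = 0)
    (hr : ∀ e < d, transApply U (compH H h) (fun i => h ^ e * P0 N i) = 0) :
    assocB U W h * H = W * assocG U H h := by
  rw [← sub_eq_zero]
  ext i j n
  simp only [assocB_mul_sub_mul_assocG_apply, finsetSum_coeff, coeff_applyCoeff, coeff_mul_C,
    coeff_crossQuot (hW _ _) (hH _ _), sum_mul, map_sum, Matrix.zero_apply, coeff_zero]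
  rw [sum_congr rfl fun k _ => sum_comm, sum_comm]
  refine sum_eq_zero fun a ha => ?_
  have he : a - (n + 1) < d := by grind
  simp only [← map_sum]
  exact sum_U_cross_eq_zero_of_orthogonal U h W H (hl _ he) (hr _ he) i j _ _

section Evaluation

variable {N : ℕ}

theorem evalM_mul (P Q : MatPoly N) (z : ℂ) : evalM (P * Q) z = evalM P z * evalM Q z :=
  Matrix.map_mul (f := evalRingHom z)

theorem evalM_add (P Q : MatPoly N) (z : ℂ) : evalM (P + Q) z = evalM P z + evalM Q z := by
  ext i j
  simp [evalM]

theorem evalM_sub (P Q : MatPoly N) (z : ℂ) : evalM (P - Q) z = evalM P z - evalM Q z := by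
  ext i j
  simp [evalM]

theorem evalM_X_smul (Q : MatPoly N) (z : ℂ) : evalM ((X : ℂ[X]) • Q) z = z • evalM Q z := by
  ext i j
  simp [evalM]

theorem evalM_map_C (M : Matrix (Fin N) (Fin N) ℂ) (z : ℂ) : evalM (M.map C) z = M := by
  ext i j
  simp [evalM]

theorem evalM_transpose (Q : MatPoly N) (z : ℂ) : evalM Qᵀ z = (evalM Q z)ᵀ := rfl

theorem matPoly_ext_evalM {P Q : MatPoly N} (h : ∀ z, evalM P z = evalM Q z) : P = Q :=
  Matrix.ext fun i j => Polynomial.funext fun z => congrFun (congrFun (h z) i) j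

end Evaluation

section DegreeBounds

variable {N : ℕ}

theorem natDegree_map_C_mul_apply_le (M : Matrix (Fin N) (Fin N) ℂ) {Q : MatPoly N} {d : ℕ}
    (hQ : ∀ i j, (Q i j).natDegree ≤ d) (i j : Fin N) : ((M.map C * Q) i j).natDegree ≤ d := by
  rw [mul_apply]
  exact natDegree_sum_le_of_forall_le _ _ fun k _ =>
    (natDegree_C_mul_le (M i k) _).trans (hQ k j)

theorem natDegree_apply_le_of_evalM_smul_eq {A : Matrix (Fin N) (Fin N) ℂ} (hA : IsUnit A)
    {P Q R : MatPoly N} {d : ℕ} (hQ : ∀ i j, (Q i j).natDegree ≤ d)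
    (hR : ∀ i j, (R i j).natDegree ≤ d + 1)
    (h : ∀ z : ℂ, z • evalM Q z = A * evalM P z + evalM R z) (i j : Fin N) :
    (P i j).natDegree ≤ d + 1 := by
  have hP : P = A⁻¹.map C * ((X : ℂ[X]) • Q - R) := matPoly_ext_evalM fun z => by
    rw [evalM_mul, evalM_map_C, evalM_sub, evalM_X_smul, h z, add_sub_cancel_right,
      ← Matrix.mul_assoc, nonsing_inv_mul _ ((isUnit_iff_isUnit_det A).mp hA), Matrix.one_mul]
  rw [hP]
  refine natDegree_map_C_mul_apply_le _ (fun i j => ?_) i j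
  refine (natDegree_sub_le _ _).trans (max_le ?_ (hR i j))
  rw [Matrix.smul_apply, smul_eq_mul, add_comm]
  exact natDegree_mul_le.trans (Nat.add_le_add natDegree_X_le (hQ i j))

theorem natDegree_apply_le_of_three_term_recurrence (A B C : ℕ → Matrix (Fin N) (Fin N) ℂ)
    (hA : ∀ m, IsUnit (A m)) (P : ℕ → MatPoly N) (hP0 : ∀ i j, (P 0 i j).natDegree ≤ 0)
    (hrec0 : ∀ z : ℂ, z • evalM (P 0) z = A 0 * evalM (P 1) z + B 0 * evalM (P 0) z)
    (hrec : ∀ (m : ℕ) (z : ℂ), z • evalM (P (m + 1)) z =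
      A (m + 1) * evalM (P (m + 2)) z + B (m + 1) * evalM (P (m + 1)) z +
        C (m + 1) * evalM (P m) z)
    (m : ℕ) (i j : Fin N) : (P m i j).natDegree ≤ m := by
  suffices H : ∀ m, (∀ i j, (P m i j).natDegree ≤ m) ∧
      ∀ i j, (P (m + 1) i j).natDegree ≤ m + 1 from (H m).1 i j
  intro m
  induction m with
  | zero =>
    refine ⟨hP0, natDegree_apply_le_of_evalM_smul_eq (hA 0) hP0
      (R := (B 0).map Polynomial.C * P 0)
      (fun i j => (natDegree_map_C_mul_apply_le _ hP0 i j).trans zero_le_one) fun z => ?_⟩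
    rw [hrec0 z, evalM_mul, evalM_map_C]
  | succ m ih =>
    refine ⟨ih.2, natDegree_apply_le_of_evalM_smul_eq (hA (m + 1)) ih.2
      (R := (B (m + 1)).map Polynomial.C * P (m + 1) + (C (m + 1)).map Polynomial.C * P m)
      (fun i j => (natDegree_add_le _ _).trans (max_le ?_ ?_)) fun z => ?_⟩
    · exact (natDegree_map_C_mul_apply_le _ ih.2 i j).trans (Nat.le_succ _)
    · exact (natDegree_map_C_mul_apply_le _ ih.1 i j).trans (by omega)
    · rw [hrec m z, evalM_add, evalM_mul, evalM_mul, evalM_map_C, evalM_map_C, add_assoc]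

theorem natDegree_apply_le_of_right_three_term_recurrence (A B C : ℕ → Matrix (Fin N) (Fin N) ℂ)
    (hC : ∀ m, IsUnit (C m)) (G : ℕ → MatPoly N) (hG0 : ∀ i j, (G 0 i j).natDegree ≤ 0)
    (hrec0 : ∀ z : ℂ, z • evalM (G 0) z = evalM (G 0) z * B 0 + evalM (G 1) z * C 1)
    (hrec : ∀ (m : ℕ) (z : ℂ), z • evalM (G (m + 1)) z =
      evalM (G m) z * A m + evalM (G (m + 1)) z * B (m + 1) +
        evalM (G (m + 2)) z * C (m + 2))
    (m : ℕ) (i j : Fin N) : (G m i j).natDegree ≤ m := by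
  refine natDegree_apply_le_of_three_term_recurrence (fun m => (C (m + 1))ᵀ) (fun m => (B m)ᵀ)
    (fun m => (A (m - 1))ᵀ) (fun m => (isUnit_transpose _).mpr (hC (m + 1))) (fun m => (G m)ᵀ)
    (fun i j => hG0 j i) (fun z => ?_) (fun m z => ?_) m j i
  · simp only [evalM_transpose, ← transpose_smul, hrec0 z, transpose_add, transpose_mul]
    exact add_comm _ _
  · simp only [evalM_transpose, ← transpose_smul, hrec m z, transpose_add, transpose_mul,
      Nat.add_sub_cancel]
    abel

end DegreeBounds

theorem first_kind_wronskian_vanishes_general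
    (N : ℕ)
    (U : Fin N → (Polynomial ℂ →ₗ[ℂ] ℂ))
    (h : Polynomial ℂ)
    (A B C : ℕ → Matrix (Fin N) (Fin N) ℂ)
    (hA : ∀ m, IsUnit (A m)) (hC : ∀ m, IsUnit (C m))
    (V G : ℕ → MatPoly N)
    (hV0I : V 0 = 1)
    (g0 : Matrix (Fin N) (Fin N) ℂ)
    (hG0c : G 0 = g0.map fun a => Polynomial.C a)
    (hVrec0 : ∀ z : ℂ, z • evalM (V 0) z = A 0 * evalM (V 1) z + B 0 * evalM (V 0) z)
    (hVrec : ∀ (m : ℕ) (z : ℂ), z • evalM (V (m + 1)) z =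
      A (m + 1) * evalM (V (m + 2)) z + B (m + 1) * evalM (V (m + 1)) z +
        C (m + 1) * evalM (V m) z)
    (hGrec0 : ∀ z : ℂ, z • evalM (G 0) z = evalM (G 0) z * B 0 + evalM (G 1) z * C 1)
    (hGrec : ∀ (m : ℕ) (z : ℂ), z • evalM (G (m + 1)) z =
      evalM (G m) z * A m + evalM (G (m + 1)) z * B (m + 1) +
        evalM (G (m + 2)) z * C (m + 2))
    (hleft : ∀ m, ∀ k < m, applyU U (fun i => h ^ k * Bvec (V m) h i) = 0)
    (hright : ∀ m, ∀ j < m,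
      transApply U (compH (G m) h) (fun i => h ^ j * P0 N i) = 0) :
    ∀ (m : ℕ) (z : ℂ),
      evalM (assocB U (V (m + 1)) h) z * evalM (G (m + 1)) z
        - evalM (V (m + 1)) z * evalM (assocG U (G (m + 1)) h) z = 0 := by
  intro m z
  have hVdeg := natDegree_apply_le_of_three_term_recurrence A B C hA V
    (fun i j => by rw [hV0I, one_apply]; split_ifs <;> simp) hVrec0 hVrec
  have hGdeg := natDegree_apply_le_of_right_three_term_recurrence A B C hC G
    (fun i j => by simp [hG0c]) hGrec0 hGrec
  rw [← evalM_mul, ← evalM_mul, ← evalM_sub, assocB_mul_eq_mul_assocG U h (hVdeg (m + 1))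
    (hGdeg (m + 1)) (hleft (m + 1)) (hright (m + 1)), sub_self]
  ext i j
  simp [evalM]

/-- Under the bi-orthogonality setup, for every `m ≥ 1` and all `z ∈ ℂ`:
`B⁽¹⁾_{m-1}(z) G_m(z) - V_m(z) G⁽¹⁾_{m-1}(z) = 0`.  (Here `B⁽¹⁾_{m-1} = assocB U (V m) h`
and `G⁽¹⁾_{m-1} = assocG U (G m) h`; the statement is quantified over `m + 1`, `m ∈ ℕ`.) -/
theorem first_kind_wronskian_vanishes
    (N : ℕ) (hN : 1 ≤ N)
    (U : Fin N → (Polynomial ℂ →ₗ[ℂ] ℂ))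
    (h : Polynomial ℂ) (hdeg : h.natDegree = N)
    (A B C : ℕ → Matrix (Fin N) (Fin N) ℂ)
    (hA : ∀ m, IsUnit (A m)) (hC : ∀ m, IsUnit (C m))
    (V G : ℕ → MatPoly N)
    (hV0I : V 0 = 1)
    (g0 : Matrix (Fin N) (Fin N) ℂ) (hg0 : IsUnit g0)
    (hG0c : G 0 = g0.map fun a => Polynomial.C a)
    (hVrec0 : ∀ z : ℂ, z • evalM (V 0) z = A 0 * evalM (V 1) z + B 0 * evalM (V 0) z)
    (hVrec : ∀ (m : ℕ) (z : ℂ), z • evalM (V (m + 1)) z =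
      A (m + 1) * evalM (V (m + 2)) z + B (m + 1) * evalM (V (m + 1)) z +
        C (m + 1) * evalM (V m) z)
    (hGrec0 : ∀ z : ℂ, z • evalM (G 0) z = evalM (G 0) z * B 0 + evalM (G 1) z * C 1)
    (hGrec : ∀ (m : ℕ) (z : ℂ), z • evalM (G (m + 1)) z =
      evalM (G m) z * A m + evalM (G (m + 1)) z * B (m + 1) +
        evalM (G (m + 2)) z * C (m + 2))
    (hleft : ∀ m, ∀ k < m, applyU U (fun i => h ^ k * Bvec (V m) h i) = 0)
    (hleftn : ∀ m, IsUnit (applyU U fun i => h ^ m * Bvec (V m) h i))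
    (hright : ∀ m, ∀ j < m,
      transApply U (compH (G m) h) (fun i => h ^ j * P0 N i) = 0)
    (hrightn : ∀ m, IsUnit (transApply U (compH (G m) h) fun i => h ^ m * P0 N i))
    (hbi : ∀ n m, transApply U (compH (G n) h) (Bvec (V m) h) =
      if n = m then 1 else 0) :
    ∀ (m : ℕ) (z : ℂ),
      evalM (assocB U (V (m + 1)) h) z * evalM (G (m + 1)) z
        - evalM (V (m + 1)) z * evalM (assocG U (G (m + 1)) h) z = 0 :=
  first_kind_wronskian_vanishes_general N U h A B C hA hC V G hV0I g0 hG0c hVrec0 hVrec hGrec0 hGrec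
    hleft hright

end
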